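/- Let G = H₁ ∗_K H₂ where H₁, H₂, K are finitely generated with finite generating sets S₁, S₂, T respectively. Suppose for each j ∈ {1,2}: (a) H_j has decidable word problem, and (b) there is an algorithm which, given a word w over S_j ∪ S_j^{-1}, decides whether the element β it represents lies in K and, if so, computes a word over T ∪ T^{-1} representing β. Then G has decidable word problem. -/

import Mathlib

/-!
A word is read from right to left while the element it spells is kept in the form
`k * s₁ * ⋯ * sₙ`, where `k` is a word over the generators of `K` and `s₁, …, sₙ` are syllables
alternating between `H₁` and `H₂`, none of them in `K`. A letter of `H_j` is multiplied, together
with the translation of `k` into a word of `H_j`, into `s₁` if `s₁` lies in `H_j`, and otherwise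
starts a new syllable; the membership oracle of `H_j` then either certifies that this syllable is
outside `K` or turns it into the new `k`. By the normal form theorem for amalgamated products such
a product is trivial only if `n = 0` and `k = 1`, and the latter is decided by the word problem of
`H₁` after translating `k`.
-/

open Monoid

/-- The evaluation in a group `G` of a word over a generating family `g : ι → G` and
formal inverses: a letter `(i, true)` is read as `g i` and `(i, false)` as `(g i)⁻¹`. -/
def evalWord {G : Type} [Group G] {ι : Type} (g : ι → G) (w : List (ι × Bool)) : G :=
  (w.map fun p => if p.2 then g p.1 else (g p.1)⁻¹).prod

section EvalWord

variable {G : Type} [Group G] {ι : Type} (g : ι → G)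

@[simp]
theorem evalWord_nil : evalWord g [] = 1 := rfl

@[simp]
theorem evalWord_cons (p : ι × Bool) (w : List (ι × Bool)) :
    evalWord g (p :: w) = (if p.2 then g p.1 else (g p.1)⁻¹) * evalWord g w := by
  simp [evalWord]

@[simp]
theorem evalWord_append (u v : List (ι × Bool)) :
    evalWord g (u ++ v) = evalWord g u * evalWord g v := by
  simp [evalWord]

theorem evalWord_eq_lift_mk (w : List (ι × Bool)) :
    evalWord g w = FreeGroup.lift g (FreeGroup.mk w) := by
  simp only [evalWord, FreeGroup.lift_mk, cond_eq_ite]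

theorem exists_evalWord_eq (hg : Subgroup.closure (Set.range g) = ⊤) (x : G) :
    ∃ w, evalWord g w = x := by
  classical
  obtain ⟨y, rfl⟩ : x ∈ (FreeGroup.lift g).range := by
    simp [FreeGroup.range_lift_eq_closure, hg]
  exact ⟨y.toWord, by rw [evalWord_eq_lift_mk, FreeGroup.mk_toWord]⟩

theorem evalWord_flatMap {K τ : Type} [Group K] (ψ : K →* G) (gT : τ → K)
    {t : τ × Bool → List (ι × Bool)} (ht : ∀ p, evalWord g (t p) = ψ (evalWord gT [p]))
    (u : List (τ × Bool)) : evalWord g (u.flatMap t) = ψ (evalWord gT u) := by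
  induction u with
  | nil => simp
  | cons p u ih =>
    rw [List.flatMap_cons, evalWord_append, ih, ht, ← map_mul, ← evalWord_append]
    rfl

end EvalWord

namespace Computable

variable {α β σ : Type} [Primcodable α] [Primcodable β] [Primcodable σ]

theorem list_foldl {f : α → List β} {g : α → σ} {h : α → σ × β → σ} (hf : Computable f)
    (hg : Computable g) (hh : Computable₂ h) :
    Computable fun a => (f a).foldl (fun s b => h a (s, b)) (g a) := by
  let G (a : α) (s : σ × List β) : σ × List β := s.2.head?.elim s fun b => (h a (s.1, b), s.2.tail)
  have hG : Computable₂ G := by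
    refine (option_casesOn (Primrec.list_head?.to_comp.comp (snd.comp snd)) snd
      (pair (hh.comp (fst.comp fst) (pair (fst.comp (snd.comp fst)) snd))
        (Primrec.list_tail.to_comp.comp (snd.comp (snd.comp fst)))).to₂).of_eq ?_
    rintro ⟨a, s, _ | _⟩ <;> rfl
  have hiter : ∀ a n (s : σ × List β),
      (G a)^[n] s = ((s.2.take n).foldl (fun x b => h a (x, b)) s.1, s.2.drop n) := by
    intro a n
    induction n with
    | zero => simp
    | succ n ih =>
      rintro ⟨x, _ | ⟨b, l⟩⟩
      · simpa [G] using ih (x, [])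
      · simpa [G] using ih (h a (x, b), l)
  have hrec : ∀ a n, Nat.rec (motive := fun _ => σ × List β) (g a, f a) (fun _ s => G a s) n =
      (G a)^[n] (g a, f a) := by
    intro a n
    induction n with
    | zero => rfl
    | succ n ih => rw [Function.iterate_succ_apply', ← ih]
  refine (fst.comp (nat_rec (list_length.comp hf) (pair hg hf)
    (hG.comp fst (snd.comp snd)).to₂)).of_eq fun a => ?_
  simp [hrec, hiter]

theorem list_foldr {f : α → List β} {g : α → σ} {h : α → β × σ → σ} (hf : Computable f)
    (hg : Computable g) (hh : Computable₂ h) :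
    Computable fun a => (f a).foldr (fun b s => h a (b, s)) (g a) :=
  (list_foldl (list_reverse.comp hf) hg <| to₂ <| hh.comp fst <| (pair snd fst).comp snd).of_eq
    fun a => by simp [List.foldl_reverse]

theorem list_flatMap {f : α → List β} {g : α → β → List σ} (hf : Computable f)
    (hg : Computable₂ g) : Computable fun a => (f a).flatMap (g a) :=
  (list_foldr hf (const [])
    (list_append.comp (hg.comp fst (fst.comp snd)) (snd.comp snd)).to₂).of_eq
    fun a => by induction f a <;> simp_all

theorem sum_getLeft? : Computable (@Sum.getLeft? α β) :=
  (sumCasesOn Computable.id (option_some.comp snd).to₂ (const none).to₂).of_eq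
    fun s => by cases s <;> rfl

theorem sum_getRight? : Computable (@Sum.getRight? α β) :=
  (sumCasesOn Computable.id (const none).to₂ (option_some.comp snd).to₂).of_eq
    fun s => by cases s <;> rfl

end Computable

namespace Monoid.PushoutI

variable {ι : Type*} {G : ι → Type*} [∀ i, Group (G i)] {K : Type*} [Group K]
  {φ : ∀ i, K →* G i}

theorem list_eq_nil_of_prod_mem_range (hφ : ∀ i, Function.Injective (φ i))
    {l : List (Σ i, G i)} (hchain : l.IsChain fun x y => x.1 ≠ y.1)
    (hl : ∀ x ∈ l, x.2 ∉ (φ x.1).range)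
    (h : (l.map fun x => of (φ := φ) x.1 x.2).prod ∈ (base φ).range) : l = [] := by
  let w : CoprodI.Word G := ⟨l, fun x hx h1 => hl x hx (h1 ▸ one_mem _), hchain⟩
  have hw : w = .empty := Reduced.eq_empty_of_mem_range hφ hl <| by
    simpa [w, CoprodI.Word.prod, map_list_prod, Function.comp_def, ofCoprodI_of] using h
  exact congrArg CoprodI.Word.toList hw

end Monoid.PushoutI

namespace AmalgamWordProblem

abbrev Syllable (ι₁ ι₂ : Type) : Type := List (ι₁ × Bool) ⊕ List (ι₂ × Bool)

abbrev State (ι₁ ι₂ τ : Type) : Type := List (τ × Bool) × List (Syllable ι₁ ι₂)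

section Algorithm

variable {ι₁ ι₂ τ γ : Type}

def splitSameSide (proj : Syllable ι₁ ι₂ → Option (List (γ × Bool)))
    (r : List (Syllable ι₁ ι₂)) : List (γ × Bool) × List (Syllable ι₁ ι₂) :=
  match r.head?.bind proj with
  | some v => (v, r.tail)
  | none => ([], r)

def pushSyllable (fm : List (γ × Bool) → Option (List (τ × Bool)))
    (mk : List (γ × Bool) → Syllable ι₁ ι₂) (w : List (γ × Bool))
    (r : List (Syllable ι₁ ι₂)) : State ι₁ ι₂ τ :=
  match fm w with
  | some u => (u, r)
  | none => ([], mk w :: r)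

/-- `mk` and `proj` embed the words of one factor as syllables and recognize its syllables,
`t` translates the generators of `K` into words of that factor. -/
def pushLetter (fm : List (γ × Bool) → Option (List (τ × Bool)))
    (t : τ × Bool → List (γ × Bool)) (mk : List (γ × Bool) → Syllable ι₁ ι₂)
    (proj : Syllable ι₁ ι₂ → Option (List (γ × Bool))) (a : γ × Bool)
    (st : State ι₁ ι₂ τ) : State ι₁ ι₂ τ :=
  pushSyllable fm mk (a :: st.1.flatMap t ++ (splitSameSide proj st.2).1)
    (splitSameSide proj st.2).2

variable (fm₁ : List (ι₁ × Bool) → Option (List (τ × Bool)))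
  (fm₂ : List (ι₂ × Bool) → Option (List (τ × Bool)))
  (t₁ : τ × Bool → List (ι₁ × Bool)) (t₂ : τ × Bool → List (ι₂ × Bool))

def step (p : (ι₁ ⊕ ι₂) × Bool) : State ι₁ ι₂ τ → State ι₁ ι₂ τ :=
  p.1.elim (fun i => pushLetter fm₁ t₁ Sum.inl Sum.getLeft? (i, p.2))
    (fun j => pushLetter fm₂ t₂ Sum.inr Sum.getRight? (j, p.2))

def run (w : List ((ι₁ ⊕ ι₂) × Bool)) : State ι₁ ι₂ τ :=
  w.foldr (step fm₁ fm₂ t₁ t₂) ([], [])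

def decider (f₁ : List (ι₁ × Bool) → Bool) (w : List ((ι₁ ⊕ ι₂) × Bool)) : Bool :=
  (run fm₁ fm₂ t₁ t₂ w).2.isEmpty && f₁ ((run fm₁ fm₂ t₁ t₂ w).1.flatMap t₁)

end Algorithm

section Computability

open Computable

variable {ι₁ ι₂ τ γ : Type} [Primcodable ι₁] [Primcodable ι₂] [Primcodable τ] [Primcodable γ]

theorem computable_splitSameSide {proj : Syllable ι₁ ι₂ → Option (List (γ × Bool))}
    (hproj : Computable proj) : Computable (splitSameSide proj) := by
  refine (option_casesOn (option_bind Primrec.list_head?.to_comp (hproj.comp snd).to₂)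
    (pair (const []) Computable.id)
    (pair snd (Primrec.list_tail.to_comp.comp fst)).to₂).of_eq fun r => ?_
  unfold splitSameSide
  cases r.head?.bind proj <;> rfl

theorem computable_pushSyllable {fm : List (γ × Bool) → Option (List (τ × Bool))}
    {mk : List (γ × Bool) → Syllable ι₁ ι₂} (hfm : Computable fm) (hmk : Computable mk) :
    Computable₂ (pushSyllable fm mk) := by
  refine (option_casesOn (hfm.comp fst) (pair (const []) (list_cons.comp (hmk.comp fst) snd))
    (pair snd (snd.comp fst)).to₂).of_eq fun p => ?_
  unfold pushSyllable
  cases fm p.1 <;> rfl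

theorem computable_pushLetter {fm : List (γ × Bool) → Option (List (τ × Bool))}
    {t : τ × Bool → List (γ × Bool)} {mk : List (γ × Bool) → Syllable ι₁ ι₂}
    {proj : Syllable ι₁ ι₂ → Option (List (γ × Bool))} (hfm : Computable fm)
    (ht : Computable t) (hmk : Computable mk) (hproj : Computable proj) :
    Computable₂ (pushLetter fm t mk proj) :=
  have hsplit := (computable_splitSameSide hproj).comp (snd.comp snd)
  (computable_pushSyllable hfm hmk).comp
    (list_append.comp (list_cons.comp fst (list_flatMap (fst.comp snd) (ht.comp snd).to₂))
      (fst.comp hsplit))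
    (snd.comp hsplit)

variable {fm₁ : List (ι₁ × Bool) → Option (List (τ × Bool))}
  {fm₂ : List (ι₂ × Bool) → Option (List (τ × Bool))}
  {t₁ : τ × Bool → List (ι₁ × Bool)} {t₂ : τ × Bool → List (ι₂ × Bool)}

theorem computable_run (hfm₁ : Computable fm₁) (hfm₂ : Computable fm₂) (ht₁ : Computable t₁)
    (ht₂ : Computable t₂) : Computable (run fm₁ fm₂ t₁ t₂) := by
  have hstep : Computable₂ (step fm₁ fm₂ t₁ t₂) := by
    refine (sumCasesOn (f := fun q : ((ι₁ ⊕ ι₂) × Bool) × State ι₁ ι₂ τ => q.1.1)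
      (g := fun q i => pushLetter fm₁ t₁ Sum.inl Sum.getLeft? (i, q.1.2) q.2)
      (h := fun q j => pushLetter fm₂ t₂ Sum.inr Sum.getRight? (j, q.1.2) q.2) (fst.comp fst)
      ((computable_pushLetter hfm₁ ht₁ sumInl sum_getLeft?).comp
        (pair snd (snd.comp (fst.comp fst))) (snd.comp fst)).to₂
      ((computable_pushLetter hfm₂ ht₂ sumInr sum_getRight?).comp
        (pair snd (snd.comp (fst.comp fst))) (snd.comp fst)).to₂).of_eq ?_
    rintro ⟨⟨_ | _, e⟩, st⟩ <;> rfl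
  exact list_foldr Computable.id (const ([], [])) (hstep.comp (fst.comp snd) (snd.comp snd)).to₂

theorem computable_decider (hfm₁ : Computable fm₁) (hfm₂ : Computable fm₂)
    (ht₁ : Computable t₁) (ht₂ : Computable t₂) {f₁ : List (ι₁ × Bool) → Bool}
    (hf₁ : Computable f₁) : Computable (decider fm₁ fm₂ t₁ t₂ f₁) := by
  have hrun := computable_run hfm₁ hfm₂ ht₁ ht₂
  have hempty : Computable fun l : List (Syllable ι₁ ι₂) => l.isEmpty :=
    (option_casesOn Primrec.list_head?.to_comp (const true) (const false).to₂).of_eq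
      fun l => by cases l <;> rfl
  exact Primrec.and.to_comp.comp (hempty.comp (snd.comp hrun))
    (hf₁.comp (list_flatMap (fst.comp hrun) (ht₁.comp snd).to₂))

end Computability

section Correctness

open PushoutI

variable {K : Type} [Group K] {H : Bool → Type} [∀ b, Group (H b)] (φ : ∀ b, K →* H b)
  {ι₁ ι₂ τ : Type} (g₁ : ι₁ → H true) (g₂ : ι₂ → H false) (gT : τ → K)

def IsRangeOracle {G ι : Type} [Group G] (ψ : K →* G) (g : ι → G) (gT : τ → K)
    (f : List (ι × Bool) → Option (List (τ × Bool))) : Prop :=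
  ∀ w, (evalWord g w ∈ ψ.range ↔ (f w).isSome) ∧
    ∀ u, f w = some u → ψ (evalWord gT u) = evalWord g w

def syllableValue (s : Syllable ι₁ ι₂) : Σ b, H b :=
  s.elim (fun v => ⟨true, evalWord g₁ v⟩) (fun v => ⟨false, evalWord g₂ v⟩)

def evalSyllables (r : List (Syllable ι₁ ι₂)) : PushoutI φ :=
  ((r.map (syllableValue g₁ g₂)).map fun x => of x.1 x.2).prod

def evalState (st : State ι₁ ι₂ τ) : PushoutI φ :=
  base φ (evalWord gT st.1) * evalSyllables φ g₁ g₂ st.2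

def IsReduced (r : List (Syllable ι₁ ι₂)) : Prop :=
  (r.map (syllableValue g₁ g₂)).IsChain (fun x y => x.1 ≠ y.1) ∧
    ∀ x ∈ r.map (syllableValue g₁ g₂), x.2 ∉ (φ x.1).range

variable {φ g₁ g₂ gT}

theorem isReduced_cons {s : Syllable ι₁ ι₂} {r : List (Syllable ι₁ ι₂)} :
    IsReduced φ g₁ g₂ (s :: r) ↔
      (∀ y ∈ (r.map (syllableValue g₁ g₂)).head?, (syllableValue g₁ g₂ s).1 ≠ y.1) ∧
      (syllableValue g₁ g₂ s).2 ∉ (φ (syllableValue g₁ g₂ s).1).range ∧ IsReduced φ g₁ g₂ r := by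
  simp only [IsReduced, List.map_cons, List.isChain_cons, List.forall_mem_cons]
  tauto

theorem evalState_eq_one_iff (hinj : ∀ b, Function.Injective (φ b)) {st : State ι₁ ι₂ τ}
    (hst : IsReduced φ g₁ g₂ st.2) :
    evalState φ g₁ g₂ gT st = 1 ↔ st.2 = [] ∧ evalWord gT st.1 = 1 := by
  constructor
  · intro h
    have hnil : st.2 = [] := List.map_eq_nil_iff.1 <|
      list_eq_nil_of_prod_mem_range hinj hst.1 hst.2 ⟨(evalWord gT st.1)⁻¹, by
        rw [map_inv, inv_eq_of_mul_eq_one_right h, evalSyllables]⟩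
    refine ⟨hnil, (map_eq_one_iff _ (base_injective hinj)).1 ?_⟩
    simpa [evalState, evalSyllables, hnil] using h
  · rintro ⟨hnil, h1⟩
    simp [evalState, evalSyllables, hnil, h1]

section Side

variable {b : Bool} {γ : Type} {g : γ → H b} {fm : List (γ × Bool) → Option (List (τ × Bool))}
  {t : τ × Bool → List (γ × Bool)} {mk : List (γ × Bool) → Syllable ι₁ ι₂}
  {proj : Syllable ι₁ ι₂ → Option (List (γ × Bool))}

theorem evalSyllables_splitSameSide
    (hmk : ∀ v, syllableValue g₁ g₂ (mk v) = ⟨b, evalWord g v⟩)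
    (hproj : ∀ s v, proj s = some v → s = mk v) (r : List (Syllable ι₁ ι₂)) :
    evalSyllables φ g₁ g₂ r = of b (evalWord g (splitSameSide proj r).1) *
      evalSyllables φ g₁ g₂ (splitSameSide proj r).2 := by
  rcases r with _ | ⟨s, r⟩
  · simp [splitSameSide]
  · rcases hs : proj s with _ | v
    · simp [splitSameSide, hs]
    · obtain rfl := hproj s v hs
      simp [splitSameSide, hs, evalSyllables, hmk]

theorem isReduced_splitSameSide
    (hmk : ∀ v, syllableValue g₁ g₂ (mk v) = ⟨b, evalWord g v⟩)
    (hproj : ∀ s v, proj s = some v → s = mk v)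
    (hproj_none : ∀ s, proj s = none → (syllableValue g₁ g₂ s).1 ≠ b)
    {r : List (Syllable ι₁ ι₂)} (hr : IsReduced φ g₁ g₂ r) :
    IsReduced φ g₁ g₂ (splitSameSide proj r).2 ∧
      ∀ x ∈ ((splitSameSide proj r).2.map (syllableValue g₁ g₂)).head?, x.1 ≠ b := by
  rcases r with _ | ⟨s, r⟩
  · simp [splitSameSide, hr]
  · rcases hs : proj s with _ | v
    · simpa [splitSameSide, hs] using ⟨hr, hproj_none s hs⟩
    · obtain rfl := hproj s v hs
      obtain ⟨hhead, -, hr⟩ := isReduced_cons.1 hr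
      rw [hmk] at hhead
      simp only [splitSameSide, List.head?_cons, Option.bind_some, hs]
      exact ⟨hr, fun y hy => (hhead y hy).symm⟩

theorem evalState_pushSyllable (hfm : IsRangeOracle (φ b) g gT fm)
    (hmk : ∀ v, syllableValue g₁ g₂ (mk v) = ⟨b, evalWord g v⟩)
    (w : List (γ × Bool)) (r : List (Syllable ι₁ ι₂)) :
    evalState φ g₁ g₂ gT (pushSyllable fm mk w r) =
      of b (evalWord g w) * evalSyllables φ g₁ g₂ r := by
  rcases hw : fm w with _ | u
  · simp [pushSyllable, hw, evalState, evalSyllables, hmk]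
  · simp [pushSyllable, hw, evalState, ← (hfm w).2 u hw, of_apply_eq_base]

theorem isReduced_pushSyllable (hfm : IsRangeOracle (φ b) g gT fm)
    (hmk : ∀ v, syllableValue g₁ g₂ (mk v) = ⟨b, evalWord g v⟩)
    {r : List (Syllable ι₁ ι₂)} (hr : IsReduced φ g₁ g₂ r)
    (hhead : ∀ x ∈ (r.map (syllableValue g₁ g₂)).head?, x.1 ≠ b) (w : List (γ × Bool)) :
    IsReduced φ g₁ g₂ (pushSyllable fm mk w r).2 := by
  rcases hw : fm w with _ | u
  · have hw' : evalWord g w ∉ (φ b).range := by simp [(hfm w).1, hw]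
    simp only [pushSyllable, hw]
    exact isReduced_cons.2 ⟨fun y hy => by rw [hmk]; exact (hhead y hy).symm, by rwa [hmk], hr⟩
  · simpa [pushSyllable, hw] using hr

theorem evalState_pushLetter (hfm : IsRangeOracle (φ b) g gT fm)
    (ht : ∀ p, evalWord g (t p) = φ b (evalWord gT [p]))
    (hmk : ∀ v, syllableValue g₁ g₂ (mk v) = ⟨b, evalWord g v⟩)
    (hproj : ∀ s v, proj s = some v → s = mk v) (a : γ × Bool) (st : State ι₁ ι₂ τ) :
    evalState φ g₁ g₂ gT (pushLetter fm t mk proj a st) =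
      of b (evalWord g [a]) * evalState φ g₁ g₂ gT st := by
  rw [pushLetter, evalState_pushSyllable hfm hmk, evalState,
    evalSyllables_splitSameSide hmk hproj st.2]
  simp [evalWord_flatMap g (φ b) gT ht, ← of_apply_eq_base φ b, mul_assoc,
    apply_ite (of (φ := φ) b)]

theorem isReduced_pushLetter (hfm : IsRangeOracle (φ b) g gT fm)
    (hmk : ∀ v, syllableValue g₁ g₂ (mk v) = ⟨b, evalWord g v⟩)
    (hproj : ∀ s v, proj s = some v → s = mk v)
    (hproj_none : ∀ s, proj s = none → (syllableValue g₁ g₂ s).1 ≠ b)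
    (a : γ × Bool) {st : State ι₁ ι₂ τ} (hst : IsReduced φ g₁ g₂ st.2) :
    IsReduced φ g₁ g₂ (pushLetter fm t mk proj a st).2 :=
  have hsplit := isReduced_splitSameSide hmk hproj hproj_none hst
  isReduced_pushSyllable hfm hmk hsplit.1 hsplit.2 _

end Side

section Run

variable {fm₁ : List (ι₁ × Bool) → Option (List (τ × Bool))}
  {fm₂ : List (ι₂ × Bool) → Option (List (τ × Bool))}
  {t₁ : τ × Bool → List (ι₁ × Bool)} {t₂ : τ × Bool → List (ι₂ × Bool)}

theorem evalState_step (hfm₁ : IsRangeOracle (φ true) g₁ gT fm₁)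
    (hfm₂ : IsRangeOracle (φ false) g₂ gT fm₂)
    (ht₁ : ∀ p, evalWord g₁ (t₁ p) = φ true (evalWord gT [p]))
    (ht₂ : ∀ p, evalWord g₂ (t₂ p) = φ false (evalWord gT [p]))
    (p : (ι₁ ⊕ ι₂) × Bool) (st : State ι₁ ι₂ τ) :
    evalState φ g₁ g₂ gT (step fm₁ fm₂ t₁ t₂ p st) =
      evalWord (Sum.elim (fun i => of (φ := φ) true (g₁ i))
        (fun j => of (φ := φ) false (g₂ j))) [p] * evalState φ g₁ g₂ gT st := by
  obtain ⟨i | j, e⟩ := p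
  · rw [step, Sum.elim_inl, evalState_pushLetter hfm₁ ht₁ (fun _ => rfl)
      (fun _ _ => Sum.getLeft?_eq_some_iff.1)]
    cases e <;> simp
  · rw [step, Sum.elim_inr, evalState_pushLetter hfm₂ ht₂ (fun _ => rfl)
      (fun _ _ => Sum.getRight?_eq_some_iff.1)]
    cases e <;> simp

theorem isReduced_step (hfm₁ : IsRangeOracle (φ true) g₁ gT fm₁)
    (hfm₂ : IsRangeOracle (φ false) g₂ gT fm₂) (p : (ι₁ ⊕ ι₂) × Bool) {st : State ι₁ ι₂ τ}
    (hst : IsReduced φ g₁ g₂ st.2) : IsReduced φ g₁ g₂ (step fm₁ fm₂ t₁ t₂ p st).2 := by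
  obtain ⟨i | j, e⟩ := p
  · exact isReduced_pushLetter hfm₁ (fun _ => rfl) (fun _ _ => Sum.getLeft?_eq_some_iff.1)
      (by rintro (_ | _) h <;> simp_all [syllableValue]) _ hst
  · exact isReduced_pushLetter hfm₂ (fun _ => rfl) (fun _ _ => Sum.getRight?_eq_some_iff.1)
      (by rintro (_ | _) h <;> simp_all [syllableValue]) _ hst

theorem evalState_run (hfm₁ : IsRangeOracle (φ true) g₁ gT fm₁)
    (hfm₂ : IsRangeOracle (φ false) g₂ gT fm₂)
    (ht₁ : ∀ p, evalWord g₁ (t₁ p) = φ true (evalWord gT [p]))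
    (ht₂ : ∀ p, evalWord g₂ (t₂ p) = φ false (evalWord gT [p]))
    (w : List ((ι₁ ⊕ ι₂) × Bool)) :
    evalState φ g₁ g₂ gT (run fm₁ fm₂ t₁ t₂ w) =
      evalWord (Sum.elim (fun i => of (φ := φ) true (g₁ i))
        (fun j => of (φ := φ) false (g₂ j))) w := by
  induction w with
  | nil => simp [run, evalState, evalSyllables]
  | cons p w ih =>
    rw [run, List.foldr_cons, ← run, evalState_step hfm₁ hfm₂ ht₁ ht₂, ih, ← evalWord_append]
    rfl

theorem isReduced_run (hfm₁ : IsRangeOracle (φ true) g₁ gT fm₁)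
    (hfm₂ : IsRangeOracle (φ false) g₂ gT fm₂) (w : List ((ι₁ ⊕ ι₂) × Bool)) :
    IsReduced φ g₁ g₂ (run fm₁ fm₂ t₁ t₂ w).2 := by
  induction w with
  | nil => simp [run, IsReduced]
  | cons p w ih => exact isReduced_step hfm₁ hfm₂ p ih

theorem decider_eq_true_iff (hinj : ∀ b, Function.Injective (φ b))
    {f₁ : List (ι₁ × Bool) → Bool} (hf₁ : ∀ w, f₁ w = true ↔ evalWord g₁ w = 1)
    (hfm₁ : IsRangeOracle (φ true) g₁ gT fm₁) (hfm₂ : IsRangeOracle (φ false) g₂ gT fm₂)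
    (ht₁ : ∀ p, evalWord g₁ (t₁ p) = φ true (evalWord gT [p]))
    (ht₂ : ∀ p, evalWord g₂ (t₂ p) = φ false (evalWord gT [p]))
    (w : List ((ι₁ ⊕ ι₂) × Bool)) :
    decider fm₁ fm₂ t₁ t₂ f₁ w = true ↔
      evalWord (Sum.elim (fun i => of (φ := φ) true (g₁ i))
        (fun j => of (φ := φ) false (g₂ j))) w = 1 := by
  rw [← evalState_run hfm₁ hfm₂ ht₁ ht₂, evalState_eq_one_iff hinj (isReduced_run hfm₁ hfm₂ w),
    decider, Bool.and_eq_true, List.isEmpty_iff, hf₁, evalWord_flatMap g₁ (φ true) gT ht₁,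
    map_eq_one_iff _ (hinj true)]

end Run

end Correctness

end AmalgamWordProblem

theorem wordProblem_of_amalgam
    {K : Type} [Group K] {H : Bool → Type} [∀ b, Group (H b)]
    (φ : ∀ b, K →* H b) (hinj : ∀ b, Function.Injective (φ b))
    {n₁ n₂ m : ℕ} (g₁ : Fin n₁ → H true) (g₂ : Fin n₂ → H false) (gT : Fin m → K)
    (hg₁ : Subgroup.closure (Set.range g₁) = ⊤)
    (hg₂ : Subgroup.closure (Set.range g₂) = ⊤)
    (wp₁ : ∃ f : List (Fin n₁ × Bool) → Bool, Computable f ∧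
      ∀ w, f w = true ↔ evalWord g₁ w = 1)
    (mem₁ : ∃ f : List (Fin n₁ × Bool) → Option (List (Fin m × Bool)),
      Computable f ∧ ∀ w,
        (evalWord g₁ w ∈ (φ true).range ↔ (f w).isSome) ∧
        ∀ u, f w = some u → φ true (evalWord gT u) = evalWord g₁ w)
    (mem₂ : ∃ f : List (Fin n₂ × Bool) → Option (List (Fin m × Bool)),
      Computable f ∧ ∀ w,
        (evalWord g₂ w ∈ (φ false).range ↔ (f w).isSome) ∧
        ∀ u, f w = some u → φ false (evalWord gT u) = evalWord g₂ w) :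
    ∃ F : List ((Fin n₁ ⊕ Fin n₂) × Bool) → Bool, Computable F ∧
      ∀ w, F w = true ↔
        evalWord (Sum.elim
          (fun i => PushoutI.of (φ := φ) true (g₁ i))
          (fun j => PushoutI.of (φ := φ) false (g₂ j))) w = 1 := by
  obtain ⟨f₁, hf₁, hwp₁⟩ := wp₁
  obtain ⟨fm₁, hfm₁, hmem₁⟩ := mem₁
  obtain ⟨fm₂, hfm₂, hmem₂⟩ := mem₂
  choose t₁ ht₁ using fun p : Fin m × Bool => exists_evalWord_eq g₁ hg₁ (φ true (evalWord gT [p]))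
  choose t₂ ht₂ using fun p : Fin m × Bool => exists_evalWord_eq g₂ hg₂ (φ false (evalWord gT [p]))
  exact ⟨AmalgamWordProblem.decider fm₁ fm₂ t₁ t₂ f₁,
    AmalgamWordProblem.computable_decider hfm₁ hfm₂ (Primrec.dom_finite t₁).to_comp
      (Primrec.dom_finite t₂).to_comp hf₁,
    AmalgamWordProblem.decider_eq_true_iff hinj hwp₁ hmem₁ hmem₂ ht₁ ht₂⟩
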